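/- Let G₁, G₂ be graphs and S ⊆ V₁ × V₂. If the projection of S onto V₁ is a powerful k₁-alliance free set in G₁, then S is a powerful (k₁ + Δ₂)-alliance free set in G₁ □ G₂, where Δ₂ is the maximum degree of G₂. -/

import Mathlib

open Classical

/-- Number of neighbors of `v` inside `S`. -/
noncomputable def dS {V : Type*} (G : SimpleGraph V) (S : Set V) (v : V) : ℕ :=
  {u ∈ S | G.Adj v u}.ncard

/-- `S` is a defensive `k`-alliance. -/
def IsDefAlliance {V : Type*} (G : SimpleGraph V) (k : ℤ) (S : Set V) : Prop :=
  S.Nonempty ∧ ∀ v ∈ S, (dS G S v : ℤ) ≥ (dS G Sᶜ v : ℤ) + k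

/-- `X` is a defensive `k`-alliance free set. -/
def IsDafFree {V : Type*} (G : SimpleGraph V) (k : ℤ) (X : Set V) : Prop :=
  ∀ S : Set V, S ⊆ X → ¬ IsDefAlliance G k S

/-- Boundary: vertices outside `S` with a neighbor in `S`. -/
def obdry {V : Type*} (G : SimpleGraph V) (S : Set V) : Set V :=
  {v | v ∉ S ∧ ∃ u ∈ S, G.Adj v u}

/-- `S` is an offensive `k`-alliance. -/
def IsOffAlliance {V : Type*} (G : SimpleGraph V) (k : ℤ) (S : Set V) : Prop :=
  S.Nonempty ∧ ∀ v ∈ obdry G S, (dS G S v : ℤ) ≥ (dS G Sᶜ v : ℤ) + k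

/-- `X` is an offensive `k`-alliance free set. -/
def IsOafFree {V : Type*} (G : SimpleGraph V) (k : ℤ) (X : Set V) : Prop :=
  ∀ S : Set V, S ⊆ X → ¬ IsOffAlliance G k S

/-- `S` is a powerful `k`-alliance. -/
def IsPowAlliance {V : Type*} (G : SimpleGraph V) (k : ℤ) (S : Set V) : Prop :=
  IsDefAlliance G k S ∧ IsOffAlliance G (k + 2) S

/-- `X` is a powerful `k`-alliance free set. -/
def IsPafFree {V : Type*} (G : SimpleGraph V) (k : ℤ) (X : Set V) : Prop :=
  ∀ S : Set V, S ⊆ X → ¬ IsPowAlliance G k S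

/-- Maximum cardinality of a defensive `k`-alliance free set. -/
noncomputable def phiD {V : Type*} (G : SimpleGraph V) (k : ℤ) : ℕ :=
  sSup {n : ℕ | ∃ X : Set V, IsDafFree G k X ∧ X.ncard = n}

/-- Maximum cardinality of an offensive `k`-alliance free set. -/
noncomputable def phiO {V : Type*} (G : SimpleGraph V) (k : ℤ) : ℕ :=
  sSup {n : ℕ | ∃ X : Set V, IsOafFree G k X ∧ X.ncard = n}

/-- Maximum cardinality of a powerful `k`-alliance free set. -/
noncomputable def phiP {V : Type*} (G : SimpleGraph V) (k : ℤ) : ℕ :=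
  sSup {n : ℕ | ∃ X : Set V, IsPafFree G k X ∧ X.ncard = n}

/-!
A vertex `(x, y)` of `G₁ □ G₂` has its neighbours in the row `V₁ × {y}`, which project to
neighbours of `x` in `G₁`, and in the column `{x} × V₂`, of which there are at most `Δ₂`.
So passing from a powerful `(k + Δ₂)`-alliance `T` of `G₁ □ G₂` to its projection `P` costs at
most `Δ₂` in the defensive inequality at `x ∈ P`, while for `x ∉ P` the column of `(x, y)` lies
outside `T`, so the offensive inequality at a boundary vertex `x` of `P` only gets better.
Hence the projection of a powerful alliance inside `S` is a powerful `k`-alliance inside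
`Prod.fst '' S`.
-/

open SimpleGraph

theorem dS_mono {V : Type*} (G : SimpleGraph V) [G.LocallyFinite] {S S' : Set V} (h : S ⊆ S')
    (v : V) : dS G S v ≤ dS G S' v :=
  Set.ncard_le_ncard (fun _ hu => ⟨h hu.1, hu.2⟩)
    ((G.neighborSet v).toFinite.subset fun _ hu => hu.2)

theorem dS_le_degree {V : Type*} (G : SimpleGraph V) (S : Set V) (v : V)
    [Fintype (G.neighborSet v)] : dS G S v ≤ G.degree v := by
  rw [← card_neighborSet_eq_degree, ← Nat.card_eq_fintype_card, Nat.card_coe_set_eq]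
  exact Set.ncard_le_ncard (fun _ hu => hu.2)

theorem dS_empty {V : Type*} (G : SimpleGraph V) (v : V) : dS G ∅ v = 0 := by
  simp [dS]

theorem IsOffAlliance.mono {V : Type*} {G : SimpleGraph V} {k k' : ℤ} {S : Set V} (hk : k' ≤ k)
    (hS : IsOffAlliance G k S) : IsOffAlliance G k' S :=
  ⟨hS.1, fun v hv => by linarith [hS.2 v hv]⟩

theorem setOf_mk_mem_subset_image_fst {α β : Type*} (T : Set (α × β)) (y : β) :
    {a | (a, y) ∈ T} ⊆ Prod.fst '' T :=
  fun _ ha => ⟨_, ha, rfl⟩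

section BoxProd

variable {V₁ V₂ : Type*} (G₁ : SimpleGraph V₁) (G₂ : SimpleGraph V₂)

theorem dS_boxProd [G₁.LocallyFinite] [G₂.LocallyFinite] (U : Set (V₁ × V₂)) (x : V₁) (y : V₂) :
    dS (G₁ □ G₂) U (x, y) = dS G₁ {a | (a, y) ∈ U} x + dS G₂ {b | (x, b) ∈ U} y := by
  set row := {a ∈ {a | (a, y) ∈ U} | G₁.Adj x a}
  set col := {b ∈ {b | (x, b) ∈ U} | G₂.Adj y b}
  have hsplit : {u ∈ U | (G₁ □ G₂).Adj (x, y) u} = (·, y) '' row ∪ (x, ·) '' col := by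
    ext ⟨a, b⟩
    simp only [boxProd_adj, Set.mem_ofPred_eq, Set.mem_union, Set.mem_image, Prod.mk.injEq, row,
      col]
    constructor
    · rintro ⟨hU, ⟨hadj, rfl⟩ | ⟨hadj, rfl⟩⟩
      exacts [Or.inl ⟨a, ⟨hU, hadj⟩, rfl, rfl⟩, Or.inr ⟨b, ⟨hU, hadj⟩, rfl, rfl⟩]
    · rintro (⟨a, ⟨hU, hadj⟩, rfl, rfl⟩ | ⟨b, ⟨hU, hadj⟩, rfl, rfl⟩)
      exacts [⟨hU, Or.inl ⟨hadj, rfl⟩⟩, ⟨hU, Or.inr ⟨hadj, rfl⟩⟩]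
  have hdisj : Disjoint ((·, y) '' row) ((x, ·) '' col) := by
    rw [Set.disjoint_left]
    rintro _ ⟨a, ⟨-, hxa⟩, rfl⟩ ⟨b, ⟨-, -⟩, hba⟩
    obtain ⟨rfl, rfl⟩ := Prod.mk.inj hba
    exact hxa.ne rfl
  have hrow : row.Finite := (G₁.neighborSet x).toFinite.subset fun _ ha => ha.2
  have hcol : col.Finite := (G₂.neighborSet y).toFinite.subset fun _ hb => hb.2
  rw [dS, hsplit, Set.ncard_union_eq hdisj (hrow.image _) (hcol.image _),
    Set.ncard_image_of_injective _ (Prod.mk_left_injective y),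
    Set.ncard_image_of_injective _ (Prod.mk_right_injective x)]
  rfl

variable [G₁.LocallyFinite] [G₂.LocallyFinite] (T : Set (V₁ × V₂)) (x : V₁) (y : V₂)

theorem dS_boxProd_le : dS (G₁ □ G₂) T (x, y) ≤ dS G₁ (Prod.fst '' T) x + G₂.degree y := by
  rw [dS_boxProd]
  exact add_le_add (dS_mono G₁ (setOf_mk_mem_subset_image_fst T y) x) (dS_le_degree G₂ _ y)

theorem dS_boxProd_le_of_notMem (hx : x ∉ Prod.fst '' T) :
    dS (G₁ □ G₂) T (x, y) ≤ dS G₁ (Prod.fst '' T) x := by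
  have hcol : {b | (x, b) ∈ T} = ∅ :=
    Set.eq_empty_of_forall_notMem fun _ hb => hx ⟨_, hb, rfl⟩
  rw [dS_boxProd, hcol, dS_empty, add_zero]
  exact dS_mono G₁ (setOf_mk_mem_subset_image_fst T y) x

theorem dS_compl_le_dS_boxProd_compl : dS G₁ (Prod.fst '' T)ᶜ x ≤ dS (G₁ □ G₂) Tᶜ (x, y) := by
  rw [dS_boxProd]
  have hrow : (Prod.fst '' T)ᶜ ⊆ {a | (a, y) ∈ Tᶜ} :=
    fun _ ha haT => ha (setOf_mk_mem_subset_image_fst T y haT)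
  exact (dS_mono G₁ hrow x).trans (Nat.le_add_right _ _)

end BoxProd

section Projection

variable {V₁ V₂ : Type*} {G₁ : SimpleGraph V₁} {G₂ : SimpleGraph V₂} [G₁.LocallyFinite]
  {T : Set (V₁ × V₂)} {k : ℤ}

theorem IsOffAlliance.image_fst [G₂.LocallyFinite] (hT : IsOffAlliance (G₁ □ G₂) k T) :
    IsOffAlliance G₁ k (Prod.fst '' T) := by
  refine ⟨hT.1.image _, ?_⟩
  rintro x ⟨hxT, _, ⟨⟨a, y⟩, haT, rfl⟩, hxa⟩
  have hbdry : (x, y) ∈ obdry (G₁ □ G₂) T :=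
    ⟨fun hxyT => hxT ⟨_, hxyT, rfl⟩, _, haT, Or.inl ⟨hxa, rfl⟩⟩
  have hoff := hT.2 _ hbdry
  have hT_le := dS_boxProd_le_of_notMem G₁ G₂ T x y hxT
  have hTc_ge := dS_compl_le_dS_boxProd_compl G₁ G₂ T x y
  omega

variable [Fintype V₂] [DecidableRel G₂.Adj]

theorem IsDefAlliance.image_fst (hT : IsDefAlliance (G₁ □ G₂) (k + G₂.maxDegree) T) :
    IsDefAlliance G₁ k (Prod.fst '' T) := by
  refine ⟨hT.1.image _, ?_⟩
  rintro _ ⟨⟨x, y⟩, hxyT, rfl⟩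
  dsimp only
  have hdef := hT.2 _ hxyT
  have hT_le := dS_boxProd_le G₁ G₂ T x y
  have hTc_ge := dS_compl_le_dS_boxProd_compl G₁ G₂ T x y
  have hdeg := G₂.degree_le_maxDegree y
  omega

theorem IsPowAlliance.image_fst (hT : IsPowAlliance (G₁ □ G₂) (k + G₂.maxDegree) T) :
    IsPowAlliance G₁ k (Prod.fst '' T) :=
  ⟨hT.1.image_fst, hT.2.image_fst.mono (by omega)⟩

end Projection

theorem stmt17 {V₁ V₂ : Type*} [Fintype V₁] [Fintype V₂]
    (G₁ : SimpleGraph V₁) (G₂ : SimpleGraph V₂) [DecidableRel G₂.Adj]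
    (k₁ : ℤ) (S : Set (V₁ × V₂))
    (h : IsPafFree G₁ k₁ (Prod.fst '' S)) :
    IsPafFree (G₁.boxProd G₂) (k₁ + (G₂.maxDegree : ℤ)) S :=
  fun _ hTS hT => h _ (Set.image_mono hTS) hT.image_fst
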